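/- arXiv:1804.09972 — 2 statements merged into one kernel-verified Lean document; each statement's English description precedes it below -/
import Mathlib

section
/- Let q ≥ 2 be an integer and let m = q² (so m is a square integer with m ≥ 3). Then the optimal threshold factor satisfies R_{m,3} = m − q = m − √m; moreover the polynomial Φ(x) = (q/(2q−1))·(1 + x/(m−q))^{m−2q+1} + ((q−1)/(2q−1))·(1 + x/(m−q))^{m} belongs to Π_{m,3} and satisfies R(Φ) = m − q. -/
/-!
If `φ ∈ Π_{m,3}` has nonnegative derivatives at `-r`, its Taylor expansion at `-r` reads
`φ(x) = ∑ bᵢ (1 + x/r)^i` with `bᵢ ≥ 0`, and `φ^{(k)}(0) = 1` says that the falling-factorial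
moments `∑ bᵢ i(i-1)⋯(i-k+1)` equal `r^k` for `k ≤ 3`. With `M = m - r` this gives
`∑ bᵢ (m-i)^j = M, M² + r, M³ + 3Mr - r` for `j = 1, 2, 3`, and the Cauchy–Schwarz inequality
`(∑ bᵢ(m-i)²)² ≤ ∑ bᵢ(m-i) · ∑ bᵢ(m-i)³` simplifies to `m ≤ M²`, i.e. `r ≤ m - √m`.
Equality needs `m - i ∈ {0, 2M - 1}` on the support of `b`; for `m = q²` and `r = m - q` this is
`Φ`, whose Taylor weights at `-r` sit at `i = m - 2q + 1` and `i = m`.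
-/

open Polynomial

noncomputable section

/-- A polynomial is absolutely monotonic on `[a, b]` if all of its derivatives
(including the 0th) are nonnegative at every point of `[a, b]`. -/
def AbsolutelyMonotonicOn (φ : Polynomial ℝ) (a b : ℝ) : Prop :=
  ∀ (k : ℕ), ∀ x ∈ Set.Icc a b, 0 ≤ (Polynomial.derivative^[k] φ).eval x

/-- The set `Π_{m,n}` of real polynomials of degree at most `m` with
`φ^{(k)}(0) = 1` for `k = 0, 1, …, n`. -/
def PiSet (m n : ℕ) : Set (Polynomial ℝ) :=
  {φ : Polynomial ℝ | φ.natDegree ≤ m ∧ ∀ k ≤ n, (Polynomial.derivative^[k] φ).eval 0 = 1}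

/-- The threshold factor `R(φ)`. -/
def thresholdFactor (φ : Polynomial ℝ) : ℝ :=
  sSup {r : ℝ | r = 0 ∨ (0 < r ∧ AbsolutelyMonotonicOn φ (-r) 0)}

/-- The optimal threshold factor `R_{m,n}`. -/
def Ropt (m n : ℕ) : ℝ :=
  sSup (thresholdFactor '' PiSet m n)

open Finset

section AbsolutelyMonotonic

variable {φ ψ : ℝ[X]} {a b : ℝ}

theorem AbsolutelyMonotonicOn.add (hφ : AbsolutelyMonotonicOn φ a b)
    (hψ : AbsolutelyMonotonicOn ψ a b) : AbsolutelyMonotonicOn (φ + ψ) a b := fun k x hx => by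
  simpa only [iterate_map_add, eval_add] using add_nonneg (hφ k x hx) (hψ k x hx)

theorem AbsolutelyMonotonicOn.C_mul {c : ℝ} (hc : 0 ≤ c) (hφ : AbsolutelyMonotonicOn φ a b) :
    AbsolutelyMonotonicOn (C c * φ) a b := fun k x hx => by
  simpa only [iterate_derivative_C_mul, eval_C_mul] using mul_nonneg hc (hφ k x hx)

end AbsolutelyMonotonic

theorem iterate_derivative_one_add_C_mul_X_pow {R : Type*} [CommRing R] (c : R) (n k : ℕ) :
    derivative^[k] ((1 + C c * X) ^ n) =
      C ((n.descFactorial k : R) * c ^ k) * (1 + C c * X) ^ (n - k) := by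
  induction k with
  | zero => simp
  | succ k ih =>
    rw [Function.iterate_succ_apply', ih, derivative_C_mul, derivative_pow, Nat.descFactorial_succ,
      Nat.sub_sub]
    simp only [derivative_add, derivative_one, derivative_C_mul_X, zero_add, map_mul, map_pow,
      map_natCast, Nat.cast_mul]
    ring

theorem eval_iterate_derivative_one_add_C_mul_X_pow {R : Type*} [CommRing R] (c x : R) (n k : ℕ) :
    (derivative^[k] ((1 + C c * X) ^ n)).eval x =
      n.descFactorial k * c ^ k * (1 + c * x) ^ (n - k) := by
  simp [iterate_derivative_one_add_C_mul_X_pow]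

theorem absolutelyMonotonicOn_one_add_C_inv_mul_X_pow (r : ℝ) (n : ℕ) :
    AbsolutelyMonotonicOn ((1 + C r⁻¹ * X) ^ n) (-r) 0 := by
  intro k x ⟨hrx, hx0⟩
  have hr : 0 ≤ r := by linarith
  have hbase : 0 ≤ 1 + r⁻¹ * x := by
    rcases hr.eq_or_lt with rfl | hr
    · simp
    · have := mul_le_mul_of_nonneg_left hrx (inv_nonneg.2 hr.le)
      rw [mul_neg, inv_mul_cancel₀ hr.ne'] at this
      linarith
  rw [eval_iterate_derivative_one_add_C_mul_X_pow]
  positivity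

section ThresholdFactor

variable {φ : ℝ[X]}

theorem thresholdFactor_le {R : ℝ} (hR : 0 ≤ R)
    (h : ∀ r, 0 < r → AbsolutelyMonotonicOn φ (-r) 0 → r ≤ R) : thresholdFactor φ ≤ R :=
  csSup_le ⟨0, Or.inl rfl⟩ <| by rintro r (rfl | ⟨hr, hφ⟩); exacts [hR, h r hr hφ]

theorem thresholdFactor_eq {R : ℝ} (hR : 0 < R) (hφ : AbsolutelyMonotonicOn φ (-R) 0)
    (h : ∀ r, 0 < r → AbsolutelyMonotonicOn φ (-r) 0 → r ≤ R) : thresholdFactor φ = R :=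
  IsGreatest.csSup_eq ⟨Or.inr ⟨hR, hφ⟩, by rintro r (rfl | ⟨hr, hφ⟩); exacts [hR.le, h r hr hφ]⟩

end ThresholdFactor

theorem taylor_coeff_nonneg {φ : ℝ[X]} {a : ℝ} {i : ℕ} (h : 0 ≤ (derivative^[i] φ).eval a) :
    0 ≤ (taylor a φ).coeff i := by
  rw [← factorial_smul_hasseDeriv, LinearMap.smul_apply, eval_smul, nsmul_eq_mul] at h
  rw [taylor_coeff]
  exact nonneg_of_mul_nonneg_right h (by positivity)

theorem eval_add_iterate_derivative_mul_pow_eq_sum_taylor {R : Type*} [CommRing R] {φ : R[X]}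
    {m : ℕ} (hφ : φ.natDegree ≤ m) (a h : R) (k : ℕ) :
    (derivative^[k] φ).eval (a + h) * h ^ k =
      ∑ i ∈ range (m + 1), (taylor a φ).coeff i * h ^ i * i.descFactorial k := by
  conv_lhs => rw [← sum_taylor_eq φ a]
  rw [sum_over_range' _ (by simp) (m + 1) (by rw [natDegree_taylor]; omega),
    iterate_derivative_sum, eval_finsetSum, sum_mul]
  refine sum_congr rfl fun i _ => ?_
  rw [iterate_derivative_C_mul, iterate_derivative_X_sub_pow, eval_C_mul, eval_smul, eval_pow,
    eval_sub, eval_X, eval_C, add_sub_cancel_left, nsmul_eq_mul]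
  rcases le_or_gt k i with hki | hik
  · rw [← pow_sub_mul_pow h hki]
    ring
  · simp [Nat.descFactorial_eq_zero_iff_lt.2 hik]

theorem le_sub_sqrt_of_descFactorial_moments {m : ℕ} {r : ℝ} {b : ℕ → ℝ} (hb : ∀ i, 0 ≤ b i)
    (hr : 0 < r) (hmom : ∀ k ≤ 3, ∑ i ∈ range (m + 1), b i * i.descFactorial k = r ^ k) :
    r ≤ m - √m := by
  -- `p` is expanded in the falling-factorial basis `t(t-1)⋯(t-k+1)`, `k ≤ 3`
  have moment : ∀ (p : ℝ → ℝ) (c : Fin 4 → ℝ),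
      (∀ i : ℕ, p i = ∑ k : Fin 4, c k * (descPochhammer ℝ k).eval (i : ℝ)) →
      ∑ i ∈ range (m + 1), b i * p i = ∑ k : Fin 4, c k * r ^ (k : ℕ) := by
    intro p c hp
    simp_rw [hp, descPochhammer_eval_eq_descFactorial, mul_sum, sum_comm (s := range (m + 1)),
      mul_left_comm (b _), ← mul_sum]
    exact sum_congr rfl fun k _ => by rw [hmom k (by omega)]
  set M := (m : ℝ) - r
  have S1 : ∑ i ∈ range (m + 1), b i * (m - i) = M := by
    rw [moment (fun t => m - t) ![m, -1, 0, 0] fun i => by simp [Fin.sum_univ_four]; ring]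
    simp [Fin.sum_univ_four, M]
    ring
  have S2 : ∑ i ∈ range (m + 1), b i * (m - i) ^ 2 = M ^ 2 + r := by
    rw [moment (fun t => (m - t) ^ 2) ![m ^ 2, -(2 * m - 1), 1, 0] fun i => by
      simp [Fin.sum_univ_four, descPochhammer_succ_eval]; ring]
    simp [Fin.sum_univ_four, M]
    ring
  have S3 : ∑ i ∈ range (m + 1), b i * (m - i) ^ 3 = M ^ 3 + 3 * M * r - r := by
    rw [moment (fun t => (m - t) ^ 3) ![m ^ 3, -(3 * m ^ 2 - 3 * m + 1), 3 * m - 3, -1] fun i => by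
      simp [Fin.sum_univ_four, descPochhammer_succ_eval]; ring]
    simp [Fin.sum_univ_four, M]
    ring
  have hm_sub (i) (hi : i ∈ range (m + 1)) : (0 : ℝ) ≤ m - i := by
    rw [sub_nonneg, Nat.cast_le]; exact mem_range_succ_iff.1 hi
  have hM : 0 ≤ M := S1 ▸ sum_nonneg fun i hi => mul_nonneg (hb i) (hm_sub i hi)
  have cauchy_schwarz : (M ^ 2 + r) ^ 2 ≤ M * (M ^ 3 + 3 * M * r - r) := by
    rw [← S2, ← S3, ← S1]
    exact sum_sq_le_sum_mul_sum_of_sq_le_mul _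
      (fun i hi => mul_nonneg (hb i) (hm_sub i hi))
      (fun i hi => mul_nonneg (hb i) (pow_nonneg (hm_sub i hi) 3)) fun i _ => (by ring : _ = _).le
  have hmM : (m : ℝ) ≤ M ^ 2 := by nlinarith
  linarith [(Real.sqrt_le_left hM).2 hmM]

theorem le_sub_sqrt_of_iterate_derivative_nonneg {φ : ℝ[X]} {m : ℕ} (hφ : φ ∈ PiSet m 3) {r : ℝ}
    (hr : 0 < r) (h : ∀ k, 0 ≤ (derivative^[k] φ).eval (-r)) : r ≤ m - √m := by
  refine le_sub_sqrt_of_descFactorial_moments (b := fun i => (taylor (-r) φ).coeff i * r ^ i)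
    (fun i => mul_nonneg (taylor_coeff_nonneg (h i)) (pow_nonneg hr.le i)) hr fun k hk => ?_
  rw [← eval_add_iterate_derivative_mul_pow_eq_sum_taylor hφ.1, neg_add_cancel, hφ.2 k hk, one_mul]

theorem le_sub_sqrt_of_absolutelyMonotonicOn {φ : ℝ[X]} {m : ℕ} (hφ : φ ∈ PiSet m 3) {r : ℝ}
    (hr : 0 < r) (h : AbsolutelyMonotonicOn φ (-r) 0) : r ≤ m - √m :=
  le_sub_sqrt_of_iterate_derivative_nonneg hφ hr fun k => h k (-r) ⟨le_rfl, neg_nonpos.2 hr.le⟩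

theorem thresholdFactor_le_sub_sqrt {φ : ℝ[X]} {m : ℕ} (hφ : φ ∈ PiSet m 3) :
    thresholdFactor φ ≤ m - √m := by
  have hsqrt : √m ≤ m := (Real.sqrt_le_left m.cast_nonneg).2 <| by
    exact_mod_cast Nat.le_self_pow two_ne_zero m
  exact thresholdFactor_le (sub_nonneg.2 hsqrt) fun _ hr => le_sub_sqrt_of_absolutelyMonotonicOn hφ hr

def extremalPoly (q m : ℕ) : ℝ[X] :=
  C ((q : ℝ) / (2 * q - 1)) * (1 + C ((m : ℝ) - q)⁻¹ * X) ^ (m - 2 * q + 1) +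
    C (((q : ℝ) - 1) / (2 * q - 1)) * (1 + C ((m : ℝ) - q)⁻¹ * X) ^ m

theorem extremalPoly_absolutelyMonotonicOn {q : ℕ} (hq : 1 ≤ q) (m : ℕ) :
    AbsolutelyMonotonicOn (extremalPoly q m) (-((m : ℝ) - q)) 0 := by
  have hq' : (1 : ℝ) ≤ q := by exact_mod_cast hq
  have hcoeff (a : ℝ) (ha : 0 ≤ a) : 0 ≤ a / (2 * q - 1) := div_nonneg ha (by linarith)
  exact ((absolutelyMonotonicOn_one_add_C_inv_mul_X_pow _ _).C_mul (hcoeff _ (by linarith))).add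
    ((absolutelyMonotonicOn_one_add_C_inv_mul_X_pow _ _).C_mul (hcoeff _ (by linarith)))

theorem extremalPoly_mem_piSet {q m : ℕ} (hq : 2 ≤ q) (hm : m = q ^ 2) :
    extremalPoly q m ∈ PiSet m 3 := by
  have h2q : 2 * q ≤ m := hm ▸ (Nat.mul_le_mul_right q hq).trans_eq (sq q).symm
  refine ⟨by unfold extremalPoly; compute_degree; omega, fun k hk => ?_⟩
  have hq' : (2 : ℝ) ≤ q := by exact_mod_cast hq
  have hm' : (m : ℝ) = q ^ 2 := by exact_mod_cast hm
  have hj : ((m - 2 * q + 1 : ℕ) : ℝ) = (q - 1) ^ 2 := by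
    rw [Nat.cast_add, Nat.cast_sub h2q]; push_cast; rw [hm']; ring
  simp only [extremalPoly, iterate_map_add, iterate_derivative_C_mul, eval_add, eval_C_mul,
    eval_iterate_derivative_one_add_C_mul_X_pow, mul_zero, add_zero, one_pow, mul_one]
  rw [← descPochhammer_eval_eq_descFactorial, ← descPochhammer_eval_eq_descFactorial, hj, hm']
  have h1 : (q : ℝ) * 2 - 1 ≠ 0 := by linarith
  have h2 : (q : ℝ) - 1 ≠ 0 := by linarith
  have h3 : (q : ℝ) ≠ 0 := by linarith
  interval_cases k <;> simp [descPochhammer_succ_eval] <;> field_simp <;> ring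

theorem statement13 (q m : ℕ) (hq : 2 ≤ q) (hm : m = q ^ 2) :
    Ropt m 3 = (m : ℝ) - (q : ℝ) ∧
    (m : ℝ) - (q : ℝ) = (m : ℝ) - Real.sqrt (m : ℝ) ∧
    (Polynomial.C ((q : ℝ) / (2 * (q : ℝ) - 1)) *
        ((1 : Polynomial ℝ) + Polynomial.C ((m : ℝ) - (q : ℝ))⁻¹ * Polynomial.X) ^ (m - 2 * q + 1)
      + Polynomial.C (((q : ℝ) - 1) / (2 * (q : ℝ) - 1)) *
        ((1 : Polynomial ℝ) + Polynomial.C ((m : ℝ) - (q : ℝ))⁻¹ * Polynomial.X) ^ m)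
      ∈ PiSet m 3 ∧
    thresholdFactor
      (Polynomial.C ((q : ℝ) / (2 * (q : ℝ) - 1)) *
        ((1 : Polynomial ℝ) + Polynomial.C ((m : ℝ) - (q : ℝ))⁻¹ * Polynomial.X) ^ (m - 2 * q + 1)
      + Polynomial.C (((q : ℝ) - 1) / (2 * (q : ℝ) - 1)) *
        ((1 : Polynomial ℝ) + Polynomial.C ((m : ℝ) - (q : ℝ))⁻¹ * Polynomial.X) ^ m)
      = (m : ℝ) - (q : ℝ) := by
  change _ ∧ _ ∧ extremalPoly q m ∈ _ ∧ thresholdFactor (extremalPoly q m) = _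
  have hsqrt : √(m : ℝ) = q := by
    rw [hm, Nat.cast_pow, Real.sqrt_sq q.cast_nonneg]
  have hpos : 0 < (m : ℝ) - q := by
    have : (2 : ℝ) ≤ q := by exact_mod_cast hq
    rw [hm, Nat.cast_pow]; nlinarith
  have hmem := extremalPoly_mem_piSet hq hm
  have hTF : thresholdFactor (extremalPoly q m) = m - q :=
    thresholdFactor_eq hpos (extremalPoly_absolutelyMonotonicOn (by omega) m) fun r hr hφ =>
      hsqrt ▸ le_sub_sqrt_of_absolutelyMonotonicOn hmem hr hφ
  refine ⟨IsGreatest.csSup_eq ⟨⟨_, hmem, hTF⟩, ?_⟩, by rw [hsqrt], hmem, hTF⟩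
  rintro _ ⟨φ, hφ, rfl⟩
  exact hsqrt ▸ thresholdFactor_le_sub_sqrt hφ
end
end

section
/- Let R > 0 be a real number and m ≥ n ≥ 1 be integers. Then R_{m,n} ≥ R if and only if for every real polynomial f of degree at most n satisfying f(j) ≥ 0 for all j = 0, 1, …, m, one has ∫ f dμ_R ≥ 0, i.e., e^{−R} Σ_{j=0}^{∞} f(j) R^j/j! ≥ 0. -/
open Polynomial

noncomputable section

/-- Integral of a polynomial against the Poisson–Charlier measure `μ_R`. -/
def pcInt (R : ℝ) (f : Polynomial ℝ) : ℝ :=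
  ∑' j : ℕ, Real.exp (-R) * f.eval (j : ℝ) * R ^ j / (Nat.factorial j : ℝ)

/-!
An absolutely monotonic `φ` on `[-r, 0]` of degree `≤ m` is exactly a combination
`φ = ∑_{j ≤ m} c_j (x + r)^j` with `c_j ≥ 0` (its Taylor expansion at `-r`), and for such `φ`
the conditions `φ^{(k)}(0) = 1`, `k ≤ n`, say that the weights `a_j = c_j r^j` satisfy
`∑_j a_j j(j-1)⋯(j-k+1) = r^k`: the measure `∑_j a_j δ_j` on `{0, …, m}` has the same factorial
moments up to order `n` as `μ_r`. Hence `R ≤ R_{m,n}` iff `(R^k)_{k ≤ n}` lies in the cone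
spanned by the vectors `(j(j-1)⋯(j-k+1))_{k ≤ n}`, `j ≤ m`; one passes from `r < R` to `R`
since this cone is closed. By Farkas' lemma, membership in the cone is tested by the linear
functionals that are nonnegative on the generators; writing a polynomial `f` of degree `≤ n` in
the falling factorial basis, these are the `f` with `f(j) ≥ 0` for `j ≤ m`, and the functional
evaluated at `(R^k)_k` is `∫ f dμ_R`.
-/

section ClosedCone

variable {ι E : Type*} [AddCommGroup E] [Module ℝ E]

theorem PointedCone.nonneg_of_mem_hull_range {v : ι → E} (f : E →ₗ[ℝ] ℝ)
    (hf : ∀ i, 0 ≤ f (v i)) {x : E} (hx : x ∈ PointedCone.hull ℝ (Set.range v)) : 0 ≤ f x := by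
  induction hx using Submodule.span_induction with
  | mem x hx => obtain ⟨i, rfl⟩ := hx; exact hf i
  | zero => simp
  | add x y _ _ hx hy => rw [map_add]; exact add_nonneg hx hy
  | smul a x _ hx => rw [← Nonneg.coe_smul, map_smul, smul_eq_mul]; exact mul_nonneg a.2 hx

theorem PointedCone.mem_hull_range_iff [Fintype ι] {v : ι → E} {x : E} :
    x ∈ PointedCone.hull ℝ (Set.range v) ↔ ∃ a : ι → ℝ, (∀ i, 0 ≤ a i) ∧ ∑ i, a i • v i = x := by
  rw [Submodule.mem_span_range_iff_exists_fun]
  constructor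
  · rintro ⟨a, rfl⟩
    exact ⟨fun i => a i, fun i => (a i).2, by simp only [Nonneg.coe_smul]⟩
  · rintro ⟨a, ha, rfl⟩
    exact ⟨fun i => ⟨a i, ha i⟩, by simp only [Nonneg.mk_smul]⟩

variable [Fintype ι] [TopologicalSpace E] [ContinuousSMul ℝ E] [T2Space E]

/-- Near `y`, the coefficients of the elements of the cone are bounded by `ℓ y + 1`, so the cone
agrees there with the image of a compact box. -/
theorem PointedCone.isClosed_hull_range [ContinuousAdd E] {v : ι → E} (ℓ : StrongDual ℝ E)
    (hv : ∀ i, ℓ (v i) = 1) : IsClosed (PointedCone.hull ℝ (Set.range v) : Set E) := by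
  set K := PointedCone.hull ℝ (Set.range v)
  refine isClosed_of_closure_subset fun y hy => ?_
  set S := (fun a : ι → ℝ => ∑ i, a i • v i) '' Set.Icc 0 (fun _ => ℓ y + 1)
  have hS : IsCompact S := isCompact_Icc.image (by fun_prop)
  have hSK : S ⊆ K := by
    rintro _ ⟨a, ha, rfl⟩
    exact PointedCone.mem_hull_range_iff.2 ⟨a, ha.1, rfl⟩
  have hKS : (K : Set E) ∩ ℓ ⁻¹' Set.Iio (ℓ y + 1) ⊆ S := by
    rintro _ ⟨hz, hzℓ⟩
    obtain ⟨a, ha, rfl⟩ := PointedCone.mem_hull_range_iff.1 hz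
    refine ⟨a, ⟨ha, fun i => ?_⟩, rfl⟩
    have hsum : ℓ (∑ i, a i • v i) = ∑ i, a i := by simp [hv]
    have hai := Finset.single_le_sum (fun j _ => ha j) (Finset.mem_univ i)
    simp only [Set.mem_preimage, Set.mem_Iio, hsum] at hzℓ
    exact hai.trans hzℓ.le
  have hyK : y ∈ closure ((K : Set E) ∩ ℓ ⁻¹' Set.Iio (ℓ y + 1)) := by
    rw [Set.inter_comm]
    exact (isOpen_Iio.preimage ℓ.continuous).inter_closure ⟨by simp, hy⟩
  exact hSK (closure_minimal hKS hS.isClosed hyK)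

theorem PointedCone.mem_hull_range_of_forall_nonneg [IsTopologicalAddGroup E]
    [LocallyConvexSpace ℝ E] {v : ι → E} (ℓ : StrongDual ℝ E) (hv : ∀ i, ℓ (v i) = 1) {x : E}
    (hx : ∀ f : StrongDual ℝ E, (∀ i, 0 ≤ f (v i)) → 0 ≤ f x) :
    x ∈ PointedCone.hull ℝ (Set.range v) := by
  by_contra hxK
  let C : ProperCone ℝ E :=
    ⟨PointedCone.hull ℝ (Set.range v), PointedCone.isClosed_hull_range ℓ hv⟩
  obtain ⟨f, hfC, hfx⟩ := C.hyperplane_separation_point hxK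
  exact (hx f fun i => hfC _ (PointedCone.subset_hull ⟨i, rfl⟩)).not_gt hfx

end ClosedCone

/- `powerMoments n r` is the vector of factorial moments `∫ x(x-1)⋯(x-k+1) dμ_r = r^k`, `k ≤ n`,
and `momentCone m n` consists of the factorial moment vectors of nonnegative measures on
`{0, …, m}`. -/
def factorialMoments (n j : ℕ) : Fin (n + 1) → ℝ := fun k => (j.descFactorial k : ℝ)

def powerMoments (n : ℕ) (r : ℝ) : Fin (n + 1) → ℝ := fun k => r ^ (k : ℕ)

def momentCone (m n : ℕ) : PointedCone ℝ (Fin (n + 1) → ℝ) :=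
  PointedCone.hull ℝ (Set.range fun j : Fin (m + 1) => factorialMoments n j)

theorem factorialMoments_zero (n j : ℕ) : factorialMoments n j 0 = 1 := by
  simp [factorialMoments]

theorem isClosed_momentCone (m n : ℕ) : IsClosed (momentCone m n : Set (Fin (n + 1) → ℝ)) :=
  PointedCone.isClosed_hull_range (.proj 0) fun j => factorialMoments_zero n j

theorem continuous_powerMoments (n : ℕ) : Continuous (powerMoments n) :=
  continuous_pi fun k => continuous_pow (k : ℕ)

theorem powerMoments_mem_momentCone_iff {m n : ℕ} {r : ℝ} :
    powerMoments n r ∈ momentCone m n ↔ ∃ a : Fin (m + 1) → ℝ, (∀ j, 0 ≤ a j) ∧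
      ∀ k ≤ n, ∑ j : Fin (m + 1), a j * (j : ℕ).descFactorial k = r ^ k := by
  rw [momentCone, PointedCone.mem_hull_range_iff]
  refine exists_congr fun a => and_congr_right fun _ => ?_
  rw [funext_iff, Fin.forall_iff]
  simp [factorialMoments, powerMoments]

theorem eval_iterate_derivative_sum_C_mul_X_add_C_pow {m : ℕ} (c : Fin (m + 1) → ℝ)
    (r x : ℝ) (k : ℕ) :
    (derivative^[k] (∑ j : Fin (m + 1), C (c j) * (X + C r) ^ (j : ℕ))).eval x =
      ∑ j : Fin (m + 1), c j * (j : ℕ).descFactorial k * (x + r) ^ ((j : ℕ) - k) := by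
  simp [iterate_derivative_sum, iterate_derivative_C_mul, iterate_derivative_X_add_pow,
    eval_finsetSum, mul_assoc]

theorem pow_mul_eval_zero_iterate_derivative_sum_C_mul_X_add_C_pow {m : ℕ}
    (c : Fin (m + 1) → ℝ) (r : ℝ) (k : ℕ) :
    r ^ k * (derivative^[k] (∑ j : Fin (m + 1), C (c j) * (X + C r) ^ (j : ℕ))).eval 0 =
      ∑ j : Fin (m + 1), c j * r ^ (j : ℕ) * (j : ℕ).descFactorial k := by
  rw [eval_iterate_derivative_sum_C_mul_X_add_C_pow, Finset.mul_sum]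
  refine Finset.sum_congr rfl fun j _ => ?_
  rcases lt_or_ge (j : ℕ) k with hjk | hkj
  · simp [Nat.descFactorial_eq_zero_iff_lt.2 hjk]
  · rw [zero_add, ← pow_mul_pow_sub r hkj]
    ring

theorem natDegree_sum_C_mul_X_add_C_pow_le {m : ℕ} (c : Fin (m + 1) → ℝ) (r : ℝ) :
    (∑ j : Fin (m + 1), C (c j) * (X + C r) ^ (j : ℕ)).natDegree ≤ m := by
  refine natDegree_sum_le_of_forall_le _ _ fun j _ => ?_
  refine (natDegree_C_mul_le _ _).trans ?_
  rw [natDegree_pow_X_add_C]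
  exact Nat.lt_succ_iff.1 j.2

theorem eq_sum_taylor_coeff_mul_X_add_C_pow {m : ℕ} {φ : ℝ[X]} (hφ : φ.natDegree ≤ m) (r : ℝ) :
    φ = ∑ j : Fin (m + 1), C ((taylor (-r) φ).coeff j) * (X + C r) ^ (j : ℕ) := by
  conv_lhs => rw [← sum_taylor_eq φ (-r)]
  rw [sum_over_range' _ (fun _ => by simp) (m + 1) (by rw [natDegree_taylor]; omega),
    ← Fin.sum_univ_eq_sum_range (fun j => C ((taylor (-r) φ).coeff j) * (X - C (-r)) ^ j)]
  simp

theorem taylor_coeff_nonneg_of_absolutelyMonotonicOn {φ : ℝ[X]} {a b : ℝ} (hab : a ≤ b)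
    (h : AbsolutelyMonotonicOn φ a b) (j : ℕ) : 0 ≤ (taylor a φ).coeff j := by
  have hj : (j.factorial : ℝ) * (taylor a φ).coeff j = (derivative^[j] φ).eval a := by
    rw [taylor_coeff, ← factorial_smul_hasseDeriv]
    simp [nsmul_eq_mul]
  have := h j a ⟨le_rfl, hab⟩
  rw [← hj] at this
  exact (mul_nonneg_iff_of_pos_left (by positivity)).1 this

theorem powerMoments_mem_momentCone_of_absolutelyMonotonicOn {m n : ℕ} {φ : ℝ[X]} {r : ℝ}
    (hr : 0 < r) (hφ : φ ∈ PiSet m n) (h : AbsolutelyMonotonicOn φ (-r) 0) :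
    powerMoments n r ∈ momentCone m n := by
  set c : Fin (m + 1) → ℝ := fun j => (taylor (-r) φ).coeff j
  refine powerMoments_mem_momentCone_iff.2 ⟨fun j => c j * r ^ (j : ℕ), fun j =>
    mul_nonneg (taylor_coeff_nonneg_of_absolutelyMonotonicOn (by linarith) h j) (by positivity),
    fun k hk => ?_⟩
  rw [← pow_mul_eval_zero_iterate_derivative_sum_C_mul_X_add_C_pow,
    ← eq_sum_taylor_coeff_mul_X_add_C_pow hφ.1, hφ.2 k hk, mul_one]

theorem exists_absolutelyMonotonicOn_of_powerMoments_mem_momentCone {m n : ℕ} {r : ℝ}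
    (hr : 0 < r) (h : powerMoments n r ∈ momentCone m n) :
    ∃ φ ∈ PiSet m n, AbsolutelyMonotonicOn φ (-r) 0 := by
  obtain ⟨a, ha, hmom⟩ := powerMoments_mem_momentCone_iff.1 h
  set c : Fin (m + 1) → ℝ := fun j => a j / r ^ (j : ℕ)
  refine ⟨∑ j, C (c j) * (X + C r) ^ (j : ℕ),
    ⟨natDegree_sum_C_mul_X_add_C_pow_le c r, fun k hk => ?_⟩, fun k x hx => ?_⟩
  · have hrk : r ^ k ≠ 0 := by positivity
    rw [← mul_right_inj' hrk, pow_mul_eval_zero_iterate_derivative_sum_C_mul_X_add_C_pow, mul_one,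
      ← hmom k hk]
    refine Finset.sum_congr rfl fun j _ => ?_
    rw [div_mul_cancel₀ _ (by positivity)]
  · rw [eval_iterate_derivative_sum_C_mul_X_add_C_pow]
    have hxr : 0 ≤ x + r := by linarith [hx.1]
    exact Finset.sum_nonneg fun j _ => by have := ha j; positivity

theorem le_of_powerMoments_mem_momentCone {m n : ℕ} (hn : 1 ≤ n) {r : ℝ}
    (h : powerMoments n r ∈ momentCone m n) : r ≤ m := by
  obtain ⟨a, ha, hmom⟩ := powerMoments_mem_momentCone_iff.1 h
  have h0 := hmom 0 (Nat.zero_le n)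
  have h1 := hmom 1 hn
  simp only [Nat.descFactorial_zero, Nat.cast_one, mul_one, pow_zero] at h0
  simp only [Nat.descFactorial_one, pow_one] at h1
  calc r = ∑ j : Fin (m + 1), a j * (j : ℕ) := h1.symm
    _ ≤ ∑ j : Fin (m + 1), a j * m := Finset.sum_le_sum fun j _ =>
      mul_le_mul_of_nonneg_left (by exact_mod_cast Nat.lt_succ_iff.1 j.2) (ha j)
    _ = m := by rw [← Finset.sum_mul, h0, one_mul]

theorem AbsolutelyMonotonicOn.mono {φ : ℝ[X]} {a b a' b' : ℝ} (h : AbsolutelyMonotonicOn φ a b)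
    (ha : a ≤ a') (hb : b' ≤ b) : AbsolutelyMonotonicOn φ a' b' :=
  fun k x hx => h k x ⟨ha.trans hx.1, hx.2.trans hb⟩

theorem absolutelyMonotonicOn_of_lt_thresholdFactor {φ : ℝ[X]} {r : ℝ} (hr : 0 < r)
    (h : r < thresholdFactor φ) : AbsolutelyMonotonicOn φ (-r) 0 := by
  obtain ⟨s, hs, hrs⟩ := exists_lt_of_lt_csSup
    (s := {r | r = 0 ∨ (0 < r ∧ AbsolutelyMonotonicOn φ (-r) 0)}) ⟨0, Or.inl rfl⟩ h
  rcases hs with rfl | ⟨-, hs⟩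
  · linarith
  · exact hs.mono (by linarith) le_rfl

theorem natCast_mem_upperBounds_thresholdSet {m n : ℕ} (hn : 1 ≤ n) {φ : ℝ[X]}
    (hφ : φ ∈ PiSet m n) :
    (m : ℝ) ∈ upperBounds {r | r = 0 ∨ (0 < r ∧ AbsolutelyMonotonicOn φ (-r) 0)} := by
  rintro r (rfl | ⟨hr, h⟩)
  · exact Nat.cast_nonneg m
  · exact le_of_powerMoments_mem_momentCone hn
      (powerMoments_mem_momentCone_of_absolutelyMonotonicOn hr hφ h)

theorem thresholdFactor_le_s14 {m n : ℕ} (hn : 1 ≤ n) {φ : ℝ[X]} (hφ : φ ∈ PiSet m n) :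
    thresholdFactor φ ≤ m :=
  csSup_le ⟨0, Or.inl rfl⟩ (natCast_mem_upperBounds_thresholdSet hn hφ)

theorem le_thresholdFactor {m n : ℕ} (hn : 1 ≤ n) {φ : ℝ[X]} (hφ : φ ∈ PiSet m n) {r : ℝ}
    (hr : 0 < r) (h : AbsolutelyMonotonicOn φ (-r) 0) : r ≤ thresholdFactor φ :=
  le_csSup ⟨m, natCast_mem_upperBounds_thresholdSet hn hφ⟩ (Or.inr ⟨hr, h⟩)

theorem powerMoments_mem_momentCone_of_le_Ropt {m n : ℕ} {R : ℝ} (hR : 0 < R)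
    (hle : R ≤ Ropt m n) : powerMoments n R ∈ momentCone m n := by
  have hne : (thresholdFactor '' PiSet m n).Nonempty := Set.nonempty_iff_ne_empty.2 fun hemp => by
    rw [Ropt, hemp, Real.sSup_empty] at hle
    linarith
  have hIoo : Set.Ioo 0 R ⊆ powerMoments n ⁻¹' momentCone m n := by
    intro r hr
    obtain ⟨_, ⟨φ, hφ, rfl⟩, hrφ⟩ := exists_lt_of_lt_csSup hne (hr.2.trans_le hle)
    exact powerMoments_mem_momentCone_of_absolutelyMonotonicOn hr.1 hφ
      (absolutelyMonotonicOn_of_lt_thresholdFactor hr.1 hrφ)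
  have hclosure := closure_minimal hIoo
    ((isClosed_momentCone m n).preimage (continuous_powerMoments n))
  rw [closure_Ioo hR.ne] at hclosure
  exact hclosure ⟨hR.le, le_rfl⟩

theorem le_Ropt_of_powerMoments_mem_momentCone {m n : ℕ} (hn : 1 ≤ n) {R : ℝ} (hR : 0 < R)
    (h : powerMoments n R ∈ momentCone m n) : R ≤ Ropt m n := by
  have hbdd : BddAbove (thresholdFactor '' PiSet m n) := by
    refine ⟨m, ?_⟩
    rintro _ ⟨φ, hφ, rfl⟩
    exact thresholdFactor_le_s14 hn hφ
  obtain ⟨φ, hφ, hφR⟩ := exists_absolutelyMonotonicOn_of_powerMoments_mem_momentCone hR h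
  calc R ≤ thresholdFactor φ := le_thresholdFactor hn hφ hR hφR
    _ ≤ Ropt m n := le_csSup hbdd ⟨φ, hφ, rfl⟩

theorem natDegree_sum_smul_descPochhammer_le {n : ℕ} (γ : Fin (n + 1) → ℝ) :
    (∑ k, γ k • descPochhammer ℝ k).natDegree ≤ n :=
  natDegree_sum_le_of_forall_le _ _ fun k _ => (natDegree_smul_le _ _).trans <| by
    rw [descPochhammer_natDegree]; exact Nat.lt_succ_iff.1 k.2

theorem exists_eq_sum_smul_descPochhammer {n : ℕ} {f : ℝ[X]} (hf : f.natDegree ≤ n) :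
    ∃ γ : Fin (n + 1) → ℝ, ∑ k, γ k • descPochhammer ℝ k = f := by
  let S : Polynomial.Sequence ℝ := ⟨fun k => descPochhammer ℝ k, fun k => by
    rw [degree_eq_natDegree (monic_descPochhammer ℝ k).ne_zero, descPochhammer_natDegree]⟩
  have hspan := S.span_degreeLE (m := n) fun k _ => by
    simp [S, (monic_descPochhammer ℝ k).leadingCoeff]
  have himage : S '' Set.Iic n = Set.range fun k : Fin (n + 1) => descPochhammer ℝ k := by
    ext p
    simp [S, Fin.exists_iff]
  rw [← Submodule.mem_span_range_iff_exists_fun, ← himage, hspan, mem_degreeLE]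
  exact degree_le_natDegree.trans (by exact_mod_cast hf)

theorem eval_natCast_sum_smul_descPochhammer {n : ℕ} (γ : Fin (n + 1) → ℝ) (j : ℕ) :
    (∑ k, γ k • descPochhammer ℝ k).eval (j : ℝ) = γ ⬝ᵥ factorialMoments n j := by
  simp [eval_finsetSum, descPochhammer_eval_eq_descFactorial, dotProduct, factorialMoments]

theorem hasSum_descPochhammer (R : ℝ) (k : ℕ) :
    HasSum (fun j : ℕ => Real.exp (-R) * (descPochhammer ℝ k).eval (j : ℝ) * R ^ j / j.factorial)
      (R ^ k) := by
  have hzero : ∑ i ∈ Finset.range k,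
      Real.exp (-R) * (descPochhammer ℝ k).eval (i : ℝ) * R ^ i / i.factorial = 0 :=
    Finset.sum_eq_zero fun i hi => by
      simp [descPochhammer_eval_eq_descFactorial,
        Nat.descFactorial_eq_zero_iff_lt.2 (Finset.mem_range.1 hi)]
  have hterm (i : ℕ) : Real.exp (-R) * (descPochhammer ℝ k).eval ((i + k : ℕ) : ℝ) *
      R ^ (i + k) / (i + k).factorial = R ^ k * (Real.exp (-R) * (R ^ i / i.factorial)) := by
    have hfac : ((i + k).factorial : ℝ) = i.factorial * (i + k).descFactorial k := by
      have := Nat.factorial_mul_descFactorial (Nat.le_add_left k i)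
      rw [Nat.add_sub_cancel] at this
      exact_mod_cast this.symm
    rw [descPochhammer_eval_eq_descFactorial, hfac, pow_add]
    field_simp
  have hexp : HasSum (fun i : ℕ => R ^ i / i.factorial) (Real.exp R) := by
    rw [Real.exp_eq_exp_ℝ]; exact NormedSpace.expSeries_div_hasSum_exp R
  have h := (hexp.mul_left (Real.exp (-R))).mul_left (R ^ k)
  rw [← Real.exp_add, neg_add_cancel, Real.exp_zero, mul_one] at h
  rw [← hasSum_nat_add_iff' k, hzero, sub_zero]
  simpa only [hterm] using h

theorem pcInt_sum_smul_descPochhammer (R : ℝ) {n : ℕ} (γ : Fin (n + 1) → ℝ) :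
    pcInt R (∑ k, γ k • descPochhammer ℝ k) = γ ⬝ᵥ powerMoments n R := by
  refine HasSum.tsum_eq ?_
  have h := hasSum_sum fun (k : Fin (n + 1)) (_ : k ∈ Finset.univ) =>
    (hasSum_descPochhammer R k).mul_left (γ k)
  have hterm (j : ℕ) : Real.exp (-R) * (∑ k, γ k • descPochhammer ℝ k).eval (j : ℝ) * R ^ j /
      j.factorial = ∑ k : Fin (n + 1), γ k *
        (Real.exp (-R) * (descPochhammer ℝ k).eval (j : ℝ) * R ^ j / j.factorial) := by
    simp only [eval_finsetSum, eval_smul, smul_eq_mul, Finset.mul_sum, Finset.sum_mul,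
      Finset.sum_div]
    exact Finset.sum_congr rfl fun k _ => by ring
  rw [show γ ⬝ᵥ powerMoments n R = ∑ k, γ k * R ^ (k : ℕ) from rfl]
  simpa only [hterm] using h

theorem powerMoments_mem_momentCone_iff_forall_pcInt_nonneg {m n : ℕ} {R : ℝ} :
    powerMoments n R ∈ momentCone m n ↔ ∀ f : ℝ[X], f.natDegree ≤ n →
      (∀ j : ℕ, j ≤ m → 0 ≤ f.eval (j : ℝ)) → 0 ≤ pcInt R f := by
  rw [momentCone]
  constructor
  · intro h f hf hfm
    obtain ⟨γ, rfl⟩ := exists_eq_sum_smul_descPochhammer hf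
    rw [pcInt_sum_smul_descPochhammer]
    refine PointedCone.nonneg_of_mem_hull_range (dotProductEquiv ℝ _ γ) (fun j => ?_) h
    simpa [eval_natCast_sum_smul_descPochhammer] using hfm j (Nat.lt_succ_iff.1 j.2)
  · intro h
    refine PointedCone.mem_hull_range_of_forall_nonneg
      (v := fun j : Fin (m + 1) => factorialMoments n j) (.proj 0)
      (fun j => factorialMoments_zero n j) fun c hc => ?_
    obtain ⟨γ, hcγ⟩ : ∃ γ : Fin (n + 1) → ℝ, ∀ y, c y = γ ⬝ᵥ y :=
      ⟨(dotProductEquiv ℝ _).symm c.toLinearMap, fun y => by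
        rw [← dotProductEquiv_apply_apply, LinearEquiv.apply_symm_apply]; rfl⟩
    have := h _ (natDegree_sum_smul_descPochhammer_le γ) fun j hj => by
      rw [eval_natCast_sum_smul_descPochhammer, ← hcγ]; exact hc ⟨j, Nat.lt_succ_iff.2 hj⟩
    rwa [pcInt_sum_smul_descPochhammer, ← hcγ] at this

theorem statement14_general (m n : ℕ) (hn : 1 ≤ n) (R : ℝ) (hR : 0 < R) :
    R ≤ Ropt m n ↔
      ∀ f : Polynomial ℝ, f.natDegree ≤ n →
        (∀ j : ℕ, j ≤ m → 0 ≤ f.eval (j : ℝ)) → 0 ≤ pcInt R f := by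
  rw [← powerMoments_mem_momentCone_iff_forall_pcInt_nonneg]
  exact ⟨powerMoments_mem_momentCone_of_le_Ropt hR, le_Ropt_of_powerMoments_mem_momentCone hn hR⟩

theorem statement14 (m n : ℕ) (hn : 1 ≤ n) (hmn : n ≤ m) (R : ℝ) (hR : 0 < R) :
    R ≤ Ropt m n ↔
      ∀ f : Polynomial ℝ, f.natDegree ≤ n →
        (∀ j : ℕ, j ≤ m → 0 ≤ f.eval (j : ℝ)) → 0 ≤ pcInt R f :=
  statement14_general m n hn R hR
end
end
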